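/- On 𝔫_{1,1}, the inner product making e₁,…,e₆ orthonormal is compatible with J and the resulting Hermitian structure (J,g) is strong KT; on the other hand, for all real t, s with s ≠ 0 and t² ≠ s², no inner product on 𝔫_{t,s} compatible with J yields a strong KT structure. (Since all 𝔫_{t,s} with s ≠ 0 are isomorphic to the complex Heisenberg Lie algebra, this expresses that on the Iwasawa manifold the strong KT condition is not stable under small deformations of the complex structure.) -/

import Mathlib

/-- The Chevalley–Eilenberg differential of a `2`-form `F` on a real Lie algebra. -/
def dTwoForm {L : Type} [LieRing L] (F : L → L → ℝ) (x y z : L) : ℝ :=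
  -F ⁅x, y⁆ z + F ⁅x, z⁆ y - F ⁅y, z⁆ x

/-- The Chevalley–Eilenberg differential of a `3`-form `τ` on a real Lie algebra. -/
def dThreeForm {L : Type} [LieRing L] (τ : L → L → L → ℝ) (x y z w : L) : ℝ :=
  -τ ⁅x, y⁆ z w + τ ⁅x, z⁆ y w - τ ⁅x, w⁆ y z - τ ⁅y, z⁆ x w + τ ⁅y, w⁆ x z - τ ⁅z, w⁆ x y

/-- `(J, g)` is strong Kähler with torsion: the `3`-form `τ(x,y,z) = −(dF)(Jx,Jy,Jz)`,
where `F(x,y) = g(Jx,y)`, is closed. -/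
def IsStrongKT {L : Type} [LieRing L] [LieAlgebra ℝ L]
    (J : L →ₗ[ℝ] L) (g : L →ₗ[ℝ] L →ₗ[ℝ] ℝ) : Prop :=
  ∀ x y z w : L,
    dThreeForm (fun a b c => -(dTwoForm (fun p q => g (J p) q) (J a) (J b) (J c))) x y z w = 0

/-- The structure relations for the Lie algebra `𝔫_{t,s}` with respect to a basis `e`. -/
def IsNtsBasis (t s : ℝ) {L : Type} [LieRing L] [LieAlgebra ℝ L]
    (e : Module.Basis (Fin 6) ℝ L) : Prop :=
  ⁅e 0, e 1⁆ = (-t) • e 4 ∧ ⁅e 2, e 3⁆ = (-(2*t)) • e 4 ∧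
  ⁅e 0, e 2⁆ = (-s) • e 4 ∧ ⁅e 1, e 3⁆ = s • e 4 ∧
  ⁅e 0, e 3⁆ = (-s) • e 5 ∧ ⁅e 1, e 2⁆ = (-s) • e 5 ∧
  ⁅e 0, e 4⁆ = 0 ∧ ⁅e 0, e 5⁆ = 0 ∧ ⁅e 1, e 4⁆ = 0 ∧ ⁅e 1, e 5⁆ = 0 ∧
  ⁅e 2, e 4⁆ = 0 ∧ ⁅e 2, e 5⁆ = 0 ∧ ⁅e 3, e 4⁆ = 0 ∧ ⁅e 3, e 5⁆ = 0 ∧ ⁅e 4, e 5⁆ = 0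

/-- The defining relations for the almost complex structure `J` with respect to a basis `e`:
`Je₁ = e₂`, `Je₂ = −e₁`, `Je₃ = e₄`, `Je₄ = −e₃`, `Je₅ = e₆`, `Je₆ = −e₅`. -/
def IsJBasis {L : Type} [LieRing L] [LieAlgebra ℝ L]
    (e : Module.Basis (Fin 6) ℝ L) (J : L →ₗ[ℝ] L) : Prop :=
  J (e 0) = e 1 ∧ J (e 1) = -e 0 ∧ J (e 2) = e 3 ∧ J (e 3) = -e 2 ∧
  J (e 4) = e 5 ∧ J (e 5) = -e 4

/-!
Since `[𝔫, 𝔫] ⊆ span{e₅, e₆}` is central and `J`-invariant, the torsion form satisfies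
`τ(c, y, z) = g([Jy, Jz], c)` for `c ∈ [𝔫, 𝔫]`, so `dτ(x, y, z, w)` is a sum of six pairings
`±g([J·, J·], [·, ·])`. In coordinates this vanishes identically for the orthonormal metric when
`t² = s²`, whereas `dτ(e₁, e₂, e₃, e₄) = 4 (s² − t²) g(e₅, e₅)` for every compatible metric.
-/

variable {L : Type} [LieRing L] [LieAlgebra ℝ L]

def torsionForm (J : L →ₗ[ℝ] L) (g : L →ₗ[ℝ] L →ₗ[ℝ] ℝ) (x y z : L) : ℝ :=
  -dTwoForm (fun p q => g (J p) q) (J x) (J y) (J z)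

theorem isStrongKT_iff (J : L →ₗ[ℝ] L) (g : L →ₗ[ℝ] L →ₗ[ℝ] ℝ) :
    IsStrongKT J g ↔ ∀ x y z w, dThreeForm (torsionForm J g) x y z w = 0 := Iff.rfl

section TorsionForm

variable (J : L →ₗ[ℝ] L) (g : L →ₗ[ℝ] L →ₗ[ℝ] ℝ)

theorem torsionForm_eq_of_lie_apply_eq_zero {c : L} (hc : ∀ z : L, ⁅J c, z⁆ = 0) (y z : L) :
    torsionForm J g c y z = g (J ⁅J y, J z⁆) (J c) := by
  simp [torsionForm, dTwoForm, hc]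

theorem dThreeForm_torsionForm_eq_of_lie_apply_lie (hJ : ∀ x y z : L, ⁅J ⁅x, y⁆, z⁆ = 0)
    (hg : ∀ x y, g (J x) (J y) = g x y) (x y z w : L) :
    dThreeForm (torsionForm J g) x y z w =
      -g ⁅J z, J w⁆ ⁅x, y⁆ + g ⁅J y, J w⁆ ⁅x, z⁆ - g ⁅J y, J z⁆ ⁅x, w⁆
        - g ⁅J x, J w⁆ ⁅y, z⁆ + g ⁅J x, J z⁆ ⁅y, w⁆ - g ⁅J x, J y⁆ ⁅z, w⁆ := by
  simp only [dThreeForm, torsionForm_eq_of_lie_apply_eq_zero J g (hJ _ _), hg]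

end TorsionForm

section Nts

variable {t s : ℝ} {e : Module.Basis (Fin 6) ℝ L} {J : L →ₗ[ℝ] L} {g : L →ₗ[ℝ] L →ₗ[ℝ] ℝ}

/-- `ntsLieCoeff₅` and `ntsLieCoeff₆` are the coefficients of `⁅x, y⁆` on `e₅ = e 4` and
`e₆ = e 5`, as functions of the coordinates of `x` and `y`. -/
def ntsLieCoeff₅ (t s : ℝ) (x y : Fin 6 → ℝ) : ℝ :=
  -t * (x 0 * y 1 - x 1 * y 0) - 2 * t * (x 2 * y 3 - x 3 * y 2)
    - s * (x 0 * y 2 - x 2 * y 0) + s * (x 1 * y 3 - x 3 * y 1)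

def ntsLieCoeff₆ (s : ℝ) (x y : Fin 6 → ℝ) : ℝ :=
  -s * (x 0 * y 3 - x 3 * y 0) - s * (x 1 * y 2 - x 2 * y 1)

theorem IsNtsBasis.lie_eq (he : IsNtsBasis t s e) (x y : L) :
    ⁅x, y⁆ = ntsLieCoeff₅ t s (e.repr x) (e.repr y) • e 4 +
      ntsLieCoeff₆ s (e.repr x) (e.repr y) • e 5 := by
  obtain ⟨h01, h23, h02, h13, h03, h12, h04, h05, h14, h15, h24, h25, h34, h35, h45⟩ := he
  conv_lhs => rw [← e.sum_repr x, ← e.sum_repr y]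
  simp only [Fin.sum_univ_six, add_lie, lie_add, smul_lie, lie_smul, lie_self,
    ← lie_skew (e 1) (e 0), ← lie_skew (e 2) (e 0), ← lie_skew (e 3) (e 0),
    ← lie_skew (e 4) (e 0), ← lie_skew (e 5) (e 0), ← lie_skew (e 2) (e 1),
    ← lie_skew (e 3) (e 1), ← lie_skew (e 4) (e 1), ← lie_skew (e 5) (e 1),
    ← lie_skew (e 3) (e 2), ← lie_skew (e 4) (e 2), ← lie_skew (e 5) (e 2),
    ← lie_skew (e 4) (e 3), ← lie_skew (e 5) (e 3), ← lie_skew (e 5) (e 4),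
    h01, h23, h02, h13, h03, h12, h04, h05, h14, h15, h24, h25, h34, h35, h45,
    ntsLieCoeff₅, ntsLieCoeff₆]
  module

theorem IsNtsBasis.lie_basis_four_eq_zero (he : IsNtsBasis t s e) (x : L) : ⁅e 4, x⁆ = 0 := by
  simp [he.lie_eq, ntsLieCoeff₅, ntsLieCoeff₆]

theorem IsNtsBasis.lie_basis_five_eq_zero (he : IsNtsBasis t s e) (x : L) : ⁅e 5, x⁆ = 0 := by
  simp [he.lie_eq, ntsLieCoeff₅, ntsLieCoeff₆]

theorem IsNtsBasis.lie_apply_lie_eq_zero (he : IsNtsBasis t s e) (hJ : IsJBasis e J)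
    (x y z : L) : ⁅J ⁅x, y⁆, z⁆ = 0 := by
  obtain ⟨-, -, -, -, hJ4, hJ5⟩ := hJ
  simp [he.lie_eq x y, hJ4, hJ5, he.lie_basis_four_eq_zero, he.lie_basis_five_eq_zero]

def jCoord (x : Fin 6 → ℝ) : Fin 6 → ℝ := ![-x 1, x 0, -x 3, x 2, -x 5, x 4]

theorem IsJBasis.repr_apply (hJ : IsJBasis e J) (x : L) :
    ⇑(e.repr (J x)) = jCoord (e.repr x) := by
  obtain ⟨hJ0, hJ1, hJ2, hJ3, hJ4, hJ5⟩ := hJ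
  have hx : J x = ∑ i, e.repr x i • J (e i) := by
    conv_lhs => rw [← e.sum_repr x]
    simp only [map_sum, map_smul]
  ext i
  fin_cases i <;> simp [hx, Fin.sum_univ_six, hJ0, hJ1, hJ2, hJ3, hJ4, hJ5, jCoord]

theorem IsJBasis.apply_apply_eq_of_orthonormal (hJ : IsJBasis e J)
    (horth : ∀ i j : Fin 6, g (e i) (e j) = if i = j then 1 else 0) (x y : L) :
    g (J x) (J y) = g x y := by
  obtain ⟨hJ0, hJ1, hJ2, hJ3, hJ4, hJ5⟩ := hJ
  have hJg : g.compl₁₂ J J = g := LinearMap.ext_basis e e fun i j => by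
    fin_cases i <;> fin_cases j <;> simp [hJ0, hJ1, hJ2, hJ3, hJ4, hJ5, horth]
  exact LinearMap.congr_fun₂ hJg x y

theorem IsNtsBasis.isStrongKT_of_orthonormal (he : IsNtsBasis t s e) (hJ : IsJBasis e J)
    (horth : ∀ i j : Fin 6, g (e i) (e j) = if i = j then 1 else 0) (hts : t ^ 2 = s ^ 2) :
    IsStrongKT J g := by
  rw [isStrongKT_iff]
  intro x y z w
  rw [dThreeForm_torsionForm_eq_of_lie_apply_lie J g (he.lie_apply_lie_eq_zero hJ)
    (hJ.apply_apply_eq_of_orthonormal horth)]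
  simp only [he.lie_eq, hJ.repr_apply, ntsLieCoeff₅, ntsLieCoeff₆, jCoord, Matrix.cons_val,
    map_add, map_smul, LinearMap.add_apply, LinearMap.smul_apply, horth, smul_eq_mul,
    Fin.reduceEq, ↓reduceIte]
  obtain rfl | rfl := sq_eq_sq_iff_eq_or_eq_neg.1 hts <;> ring

theorem IsNtsBasis.dThreeForm_torsionForm_basis_eq (he : IsNtsBasis t s e) (hJ : IsJBasis e J)
    (hg : ∀ x y, g (J x) (J y) = g x y) :
    dThreeForm (torsionForm J g) (e 0) (e 1) (e 2) (e 3) =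
      4 * (s ^ 2 - t ^ 2) * g (e 4) (e 4) := by
  rw [dThreeForm_torsionForm_eq_of_lie_apply_lie J g (he.lie_apply_lie_eq_zero hJ) hg]
  obtain ⟨hJ0, hJ1, hJ2, hJ3, hJ4, -⟩ := hJ
  have h55 : g (e 5) (e 5) = g (e 4) (e 4) := by rw [← hJ4, hg]
  simp only [hJ0, hJ1, hJ2, hJ3, he.lie_eq, map_neg, e.repr_self, Finsupp.coe_neg, Pi.neg_apply,
    Finsupp.single_apply, Fin.reduceEq, ↓reduceIte, ntsLieCoeff₅, ntsLieCoeff₆, map_add, map_smul,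
    LinearMap.add_apply, LinearMap.smul_apply, smul_eq_mul, h55]
  ring

end Nts

theorem nts_strongKT_not_stable :
    (∀ (L : Type) [LieRing L] [LieAlgebra ℝ L] (e : Module.Basis (Fin 6) ℝ L),
      IsNtsBasis 1 1 e → ∀ J : L →ₗ[ℝ] L, IsJBasis e J →
        ∀ g : L →ₗ[ℝ] L →ₗ[ℝ] ℝ, (∀ x y : L, g x y = g y x) →
          (∀ i j : Fin 6, g (e i) (e j) = if i = j then 1 else 0) →
            (∀ x y : L, g (J x) (J y) = g x y) ∧ IsStrongKT J g) ∧
    (∀ t s : ℝ, s ≠ 0 → t ^ 2 ≠ s ^ 2 →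
      ∀ (L : Type) [LieRing L] [LieAlgebra ℝ L] (e : Module.Basis (Fin 6) ℝ L),
        IsNtsBasis t s e → ∀ J : L →ₗ[ℝ] L, IsJBasis e J →
          ∀ g : L →ₗ[ℝ] L →ₗ[ℝ] ℝ, (∀ x y : L, g x y = g y x) →
            (∀ x : L, x ≠ 0 → 0 < g x x) →
              (∀ x y : L, g (J x) (J y) = g x y) → ¬ IsStrongKT J g) := by
  refine ⟨fun L _ _ e he J hJ g _ horth => ?_,
    fun t s _ hts L _ _ e he J hJ g _ hpos hg hKT => ?_⟩
  · exact ⟨hJ.apply_apply_eq_of_orthonormal horth, he.isStrongKT_of_orthonormal hJ horth rfl⟩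
  · have hτ := he.dThreeForm_torsionForm_basis_eq hJ hg
    rw [(isStrongKT_iff J g).1 hKT] at hτ
    have hg₄ : g (e 4) (e 4) ≠ 0 := (hpos _ (e.ne_zero 4)).ne'
    have hst : s ^ 2 - t ^ 2 = 0 := by simpa [hg₄] using hτ.symm
    exact hts (sub_eq_zero.1 hst).symm
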